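/- arXiv:1206.5099 — 6 statements merged into one kernel-verified Lean document; each statement's English description precedes it below -/
import Mathlib

section
/- If T is a bounded linear operator on a complex Hilbert space and λ is an extended eigenvalue of T, then the spectra of T and λT intersect: σ(T) ∩ σ(λT) ≠ ∅. -/
/-!
If `T X = λ X T` with `X ≠ 0`, then `X` is a null vector of the operator `Y ↦ T Y - λ Y T` on
`L(H)`, so `0` lies in its spectrum. Left and right multiplication by `T` commute, and for commuting
`a`, `b` in a complex Banach algebra `σ(a + b) ⊆ σ(a) + σ(b)`: both lie in their bicommutant, a
closed commutative subalgebra with the same spectra, where every spectral value of `a + b` is a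
character value `φ a + φ b`. Hence `0 = ν - λ μ` with `ν, μ ∈ σ(T)`, and `ν = λ μ ∈ σ(λ T)`.
-/

open scoped Pointwise

namespace Subalgebra

variable {R A : Type*} [CommRing R] [Ring A] [Algebra R A]

lemma isUnit_of_isUnit_coe_centralizer {s : Set A} {x : centralizer R s}
    (hx : IsUnit (x : A)) : IsUnit x := by
  obtain ⟨u, hu⟩ := hx
  have hinv : (↑u⁻¹ : A) ∈ centralizer R s := fun g hg ↦
    (Commute.units_inv_right (show Commute g (u : A) from hu ▸ x.2 g hg)).eq
  exact ⟨⟨x, ⟨_, hinv⟩, Subtype.ext (by simp [← hu]), Subtype.ext (by simp [← hu])⟩, rfl⟩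

lemma spectrum_centralizer_subset (s : Set A) (x : centralizer R s) :
    spectrum R x ⊆ spectrum R (x : A) :=
  fun _ hr hunit ↦ hr (isUnit_of_isUnit_coe_centralizer hunit)

end Subalgebra

lemma spectrum_op {R A : Type*} [CommSemiring R] [Ring A] [Algebra R A] (a : A) :
    spectrum R (MulOpposite.op a) = spectrum R a := by
  ext r
  simp only [spectrum.mem_iff, MulOpposite.algebraMap_apply, ← MulOpposite.op_sub, isUnit_op]

lemma spectrum_add_subset_of_comm {B : Type*} [NormedCommRing B] [NormedAlgebra ℂ B]
    [CompleteSpace B] (a b : B) : spectrum ℂ (a + b) ⊆ spectrum ℂ a + spectrum ℂ b := by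
  intro z hz
  obtain ⟨φ, rfl⟩ := WeakDual.CharacterSpace.mem_spectrum_iff_exists.mp hz
  exact ⟨φ a, AlgHom.apply_mem_spectrum φ a, φ b, AlgHom.apply_mem_spectrum φ b,
    (map_add φ a b).symm⟩

namespace ContinuousLinearMap

variable (𝕜 A : Type*) [NontriviallyNormedField 𝕜] [NormedRing A] [NormedAlgebra 𝕜 A]

noncomputable def mulLeftAlgHom : A →ₐ[𝕜] A →L[𝕜] A where
  toFun := mul 𝕜 A
  map_one' := ext one_mul
  map_mul' a b := ext (mul_assoc a b)
  map_zero' := map_zero _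
  map_add' := map_add _
  commutes' r := ext fun x ↦ by simp [Algebra.algebraMap_eq_smul_one]

noncomputable def mulRightAlgHom : Aᵐᵒᵖ →ₐ[𝕜] A →L[𝕜] A where
  toFun a := (mul 𝕜 A).flip a.unop
  map_one' := ext mul_one
  map_mul' a b := ext fun x ↦ (mul_assoc x b.unop a.unop).symm
  map_zero' := by simp
  map_add' a b := by simp
  commutes' r := ext fun x ↦ by simp [Algebra.algebraMap_eq_smul_one]

variable {𝕜 A}

@[simp] lemma mulLeftAlgHom_apply (a x : A) : mulLeftAlgHom 𝕜 A a x = a * x := rfl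

@[simp] lemma mulRightAlgHom_apply (a : Aᵐᵒᵖ) (x : A) :
    mulRightAlgHom 𝕜 A a x = x * a.unop := rfl

lemma commute_mulLeftAlgHom_mulRightAlgHom (a : A) (b : Aᵐᵒᵖ) :
    Commute (mulLeftAlgHom 𝕜 A a) (mulRightAlgHom 𝕜 A b) :=
  ext fun x ↦ (mul_assoc a x b.unop).symm

end ContinuousLinearMap

section BanachAlgebra

open ContinuousLinearMap

variable {A : Type*} [NormedRing A] [NormedAlgebra ℂ A] [CompleteSpace A]

theorem Commute.spectrum_add_subset {a b : A} (hab : Commute a b) :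
    spectrum ℂ (a + b) ⊆ spectrum ℂ a + spectrum ℂ b := by
  let B := Subalgebra.centralizer ℂ (Set.centralizer {a, b})
  have hB_comm : ∀ x ∈ B, ∀ y ∈ B, x * y = y * x :=
    Set.centralizer_centralizer_comm_of_comm (by simpa using ⟨hab.eq, hab.eq.symm⟩)
  let : NormedCommRing B :=
    { (inferInstance : NormedRing B) with mul_comm := fun x y ↦ Subtype.ext (hB_comm x x.2 y y.2) }
  have : CompleteSpace B := (Set.isClosed_centralizer _).completeSpace_coe
  have ha : a ∈ B := Set.subset_centralizer_centralizer (by simp)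
  have hb : b ∈ B := Set.subset_centralizer_centralizer (by simp)
  calc spectrum ℂ (a + b) ⊆ spectrum ℂ (⟨a, ha⟩ + ⟨b, hb⟩ : B) :=
        spectrum.subset_subalgebra (⟨a, ha⟩ + ⟨b, hb⟩ : B)
    _ ⊆ spectrum ℂ (⟨a, ha⟩ : B) + spectrum ℂ (⟨b, hb⟩ : B) := spectrum_add_subset_of_comm _ _
    _ ⊆ spectrum ℂ a + spectrum ℂ b := Set.add_subset_add
      (Subalgebra.spectrum_centralizer_subset _ _) (Subalgebra.spectrum_centralizer_subset _ _)

theorem Commute.exists_mem_spectrum_mul_mem_spectrum {a b : A} (hab : Commute a b) {c : ℂ}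
    (h : ¬IsUnit (a - c • b)) : ∃ μ ∈ spectrum ℂ b, c * μ ∈ spectrum ℂ a := by
  have : Nontrivial A :=
    (subsingleton_or_nontrivial A).resolve_left fun _ ↦ h (isUnit_of_subsingleton _)
  have h0 : (0 : ℂ) ∈ spectrum ℂ (a + (-c) • b) := by
    rwa [spectrum.zero_mem_iff, neg_smul, ← sub_eq_add_neg]
  obtain ⟨ν, hν, _, hμ', hsum⟩ := (hab.smul_right (-c)).spectrum_add_subset h0
  rw [spectrum.smul_eq_smul _ _ (spectrum.nonempty b)] at hμ'
  obtain ⟨μ, hμ, rfl⟩ := hμ'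
  refine ⟨μ, hμ, ?_⟩
  convert hν using 1
  simp only [smul_eq_mul] at hsum
  linear_combination -hsum

theorem spectrum_inter_spectrum_smul_nonempty {a x : A} {c : ℂ} (hx : x ≠ 0)
    (h : a * x = c • (x * a)) : (spectrum ℂ a ∩ spectrum ℂ (c • a)).Nonempty := by
  have : Nontrivial A := nontrivial_of_ne x 0 hx
  set L := mulLeftAlgHom ℂ A a
  set R := mulRightAlgHom ℂ A (MulOpposite.op a)
  have hLR_x : (L - c • R) x = 0 := by simp [L, R, h]
  have hLR : ¬IsUnit (L - c • R) := fun hu ↦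
    hx ((injective_iff_map_eq_zero _).mp (isUnit_iff_bijective.mp hu).injective x hLR_x)
  obtain ⟨μ, hμR, hcμL⟩ :=
    (commute_mulLeftAlgHom_mulRightAlgHom a _).exists_mem_spectrum_mul_mem_spectrum hLR
  have hμ : μ ∈ spectrum ℂ a := spectrum_op (R := ℂ) a ▸ AlgHom.spectrum_apply_subset _ _ hμR
  refine ⟨c * μ, AlgHom.spectrum_apply_subset _ _ hcμL, ?_⟩
  rw [spectrum.smul_eq_smul _ _ ⟨μ, hμ⟩]
  exact Set.smul_mem_smul_set hμ

end BanachAlgebra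

theorem spectra_intersect_of_extended_eigenvalue_general
    {H : Type*} [NormedAddCommGroup H] [InnerProductSpace ℂ H] [CompleteSpace H]
    (T : H →L[ℂ] H) (lam : ℂ)
    (hlam : ∃ X : H →L[ℂ] H, X ≠ 0 ∧ T ∘L X = lam • (X ∘L T)) :
    (spectrum ℂ T ∩ spectrum ℂ (lam • T)).Nonempty :=
  let ⟨_, hX, hTX⟩ := hlam
  spectrum_inter_spectrum_smul_nonempty hX hTX

/-- If `T` is a bounded operator on a (nonzero) complex Hilbert space and
`λ` is an extended eigenvalue of `T` (i.e. `T X = λ • X T` for some nonzero bounded `X`),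
then `σ(T) ∩ σ(λ T) ≠ ∅`. -/
theorem spectra_intersect_of_extended_eigenvalue
    {H : Type*} [NormedAddCommGroup H] [InnerProductSpace ℂ H] [CompleteSpace H]
    [Nontrivial H] (T : H →L[ℂ] H) (lam : ℂ)
    (hlam : ∃ X : H →L[ℂ] H, X ≠ 0 ∧ T ∘L X = lam • (X ∘L T)) :
    (spectrum ℂ T ∩ spectrum ℂ (lam • T)).Nonempty :=
  spectra_intersect_of_extended_eigenvalue_general T lam hlam
end

section
/- Let T be a non-invertible linear operator on a finite-dimensional complex Hilbert space H. Then every complex number λ is an extended eigenvalue of T. -/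
/-! In finite dimension a non-invertible `T` has both a nonzero kernel vector `v` and a nonzero
functional `f` vanishing on its range. The rank-one operator `X x = f x • v` then satisfies
`T X = 0 = X T`, hence `T X = λ X T` for every `λ`. -/

namespace Module.End

variable {K V : Type*} [DivisionRing K] [AddCommGroup V] [Module K V]

theorem exists_ne_zero_mul_eq_zero_and_mul_eq_zero_of_ker_ne_bot_of_range_ne_top
    {T : Module.End K V} (hker : LinearMap.ker T ≠ ⊥) (hrange : LinearMap.range T ≠ ⊤) :
    ∃ X : Module.End K V, X ≠ 0 ∧ T * X = 0 ∧ X * T = 0 := by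
  obtain ⟨v, hv, hv0⟩ := Submodule.exists_mem_ne_zero_of_ne_bot hker
  obtain ⟨f, hf0, hf⟩ :=
    Submodule.exists_dual_map_eq_bot_of_lt_top hrange.lt_top inferInstance
  obtain ⟨w, hw⟩ := DFunLike.ne_iff.mp hf0
  have hfT : ∀ x, f (T x) = 0 := fun x =>
    (Submodule.mem_bot K).mp (hf ▸ Submodule.mem_map_of_mem (LinearMap.mem_range_self T x))
  refine ⟨f.smulRight v, fun h => ?_, ?_, ?_⟩
  · exact smul_ne_zero hw hv0 (by simpa using LinearMap.congr_fun h w)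
  · ext x
    simp [LinearMap.mem_ker.mp hv]
  · ext x
    simp [hfT]

theorem exists_ne_zero_mul_eq_zero_and_mul_eq_zero_of_not_isUnit [FiniteDimensional K V]
    {T : Module.End K V} (hT : ¬IsUnit T) :
    ∃ X : Module.End K V, X ≠ 0 ∧ T * X = 0 ∧ X * T = 0 :=
  exists_ne_zero_mul_eq_zero_and_mul_eq_zero_of_ker_ne_bot_of_range_ne_top
    (mt (LinearMap.isUnit_iff_ker_eq_bot T).mpr hT)
    (mt (LinearMap.isUnit_iff_range_eq_top T).mpr hT)

end Module.End

namespace ContinuousLinearMap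

variable {𝕜 E : Type*} [NontriviallyNormedField 𝕜] [CompleteSpace 𝕜]
  [NormedAddCommGroup E] [NormedSpace 𝕜 E] [FiniteDimensional 𝕜 E]

theorem exists_ne_zero_comp_eq_zero_and_comp_eq_zero_of_not_isUnit
    {T : E →L[𝕜] E} (hT : ¬IsUnit T) :
    ∃ X : E →L[𝕜] E, X ≠ 0 ∧ T ∘L X = 0 ∧ X ∘L T = 0 := by
  have : CompleteSpace E := FiniteDimensional.complete 𝕜 E
  obtain ⟨X, hX0, hTX, hXT⟩ := Module.End.exists_ne_zero_mul_eq_zero_and_mul_eq_zero_of_not_isUnit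
    (mt (isUnit_iff_isUnit_toLinearMap (f := T)).mpr hT)
  refine ⟨LinearMap.toContinuousLinearMap X, ?_, ?_, ?_⟩
  · simpa using hX0
  · ext x
    exact LinearMap.congr_fun hTX x
  · ext x
    exact LinearMap.congr_fun hXT x

end ContinuousLinearMap

theorem extended_spectrum_eq_univ_of_not_invertible_general
    {H : Type*} [NormedAddCommGroup H] [InnerProductSpace ℂ H]
    [FiniteDimensional ℂ H] (T : H →L[ℂ] H)
    (hT : ¬ IsUnit T) (lam : ℂ) :
    ∃ X : H →L[ℂ] H, X ≠ 0 ∧ T ∘L X = lam • (X ∘L T) := by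
  obtain ⟨X, hX0, hTX, hXT⟩ :=
    ContinuousLinearMap.exists_ne_zero_comp_eq_zero_and_comp_eq_zero_of_not_isUnit hT
  exact ⟨X, hX0, by rw [hTX, hXT, smul_zero]⟩

/-- If `T` is a non-invertible operator on a finite-dimensional complex
Hilbert space `H` (of dimension `≥ 1`), then every `λ ∈ ℂ` is an extended eigenvalue of `T`. -/
theorem extended_spectrum_eq_univ_of_not_invertible
    {H : Type*} [NormedAddCommGroup H] [InnerProductSpace ℂ H]
    [FiniteDimensional ℂ H] [Nontrivial H] (T : H →L[ℂ] H)
    (hT : ¬ IsUnit T) (lam : ℂ) :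
    ∃ X : H →L[ℂ] H, X ≠ 0 ∧ T ∘L X = lam • (X ∘L T) :=
  extended_spectrum_eq_univ_of_not_invertible_general T hT lam
end

section
/- Let T be a linear operator on a finite-dimensional complex Hilbert space H. Then the set of extended eigenvalues of T equals {λ ∈ ℂ : σ(T) ∩ σ(λT) ≠ ∅}. -/
/-!
If `σ(T)` and `σ(λT)` are disjoint, the minimal polynomial `p` of `λT` has no root in `σ(T)`,
so `p(T)` is invertible by the spectral mapping theorem; an intertwiner `TX = X(λT)` also
intertwines `p(T)` and `p(λT) = 0`, whence `p(T)X = 0` and `X = 0`. Conversely, for a common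
point `μ` of the two spectra, the rank-one map `X = φ(·) u` built from an eigenvector `Tu = μu`
and a left eigenvector `φ ∘ λT = μφ` satisfies `TX = X(λT)`.
-/

open Polynomial

theorem SemiconjBy.aeval {R A : Type*} [CommSemiring R] [Semiring A] [Algebra R A]
    {a x y : A} (h : SemiconjBy a x y) (p : R[X]) :
    SemiconjBy a (aeval x p) (aeval y p) := by
  induction p using Polynomial.induction_on with
  | C r => rw [aeval_C, aeval_C]; exact (Algebra.commutes r a).symm
  | add p q hp hq => simpa only [map_add] using hp.add_right hq
  | monomial n r ih => simpa only [pow_succ, ← mul_assoc, map_mul, aeval_X] using ih.mul_right h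

theorem AlgEquiv.exists_ne_zero_semiconjBy_iff {R A B : Type*} [CommSemiring R] [Semiring A]
    [Semiring B] [Algebra R A] [Algebra R B] (e : A ≃ₐ[R] B) (f g : A) :
    (∃ y : B, y ≠ 0 ∧ SemiconjBy y (e g) (e f)) ↔ ∃ x : A, x ≠ 0 ∧ SemiconjBy x g f := by
  refine ⟨fun ⟨y, hy, h⟩ => ⟨e.symm y, ?_, ?_⟩, fun ⟨x, hx, h⟩ => ⟨e x, ?_, h.map e⟩⟩
  · simpa using hy
  · simpa using h.map e.symm
  · simpa using hx

namespace Module.End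

variable {K V : Type*} [Field K] [AddCommGroup V] [Module K V] [FiniteDimensional K V]

theorem exists_dual_comp_eq_smul_of_mem_spectrum {g : End K V} {μ : K} (hμ : μ ∈ spectrum K g) :
    ∃ φ : Module.Dual K V, φ ≠ 0 ∧ φ ∘ₗ g = μ • φ := by
  have hrange : LinearMap.range (algebraMap K (End K V) μ - g) < ⊤ := by
    rw [lt_top_iff_ne_top, ne_eq, ← LinearMap.isUnit_iff_range_eq_top]
    exact spectrum.mem_iff.mp hμ
  obtain ⟨φ, hφ, hφrange⟩ := Submodule.exists_dual_map_eq_bot_of_lt_top hrange inferInstance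
  have hφ_comp : φ ∘ₗ (algebraMap K (End K V) μ - g) = 0 := by
    rw [← LinearMap.range_eq_bot, LinearMap.range_comp, hφrange]
  rw [LinearMap.comp_sub, sub_eq_zero, Module.algebraMap_end_eq_smul_id, LinearMap.comp_smul,
    LinearMap.comp_id] at hφ_comp
  exact ⟨φ, hφ, hφ_comp.symm⟩

theorem exists_ne_zero_semiconjBy_of_mem_spectrum {f g : End K V} {μ : K}
    (hf : μ ∈ spectrum K f) (hg : μ ∈ spectrum K g) : ∃ x : End K V, x ≠ 0 ∧ SemiconjBy x g f := by
  obtain ⟨u, hu⟩ := (hasEigenvalue_iff_mem_spectrum.mpr hf).exists_hasEigenvector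
  obtain ⟨φ, hφ, hφg⟩ := exists_dual_comp_eq_smul_of_mem_spectrum hg
  refine ⟨φ.smulRight u, ?_, LinearMap.ext fun v => ?_⟩
  · obtain ⟨v, hv⟩ : ∃ v, φ v ≠ 0 := by
      by_contra! h
      exact hφ (LinearMap.ext h)
    intro h
    exact smul_ne_zero hv hu.2 (LinearMap.congr_fun h v)
  · have hφv : φ (g v) = μ * φ v := LinearMap.congr_fun hφg v
    change φ (g v) • u = f (φ v • u)
    rw [map_smul, hu.apply_eq_smul, hφv, mul_smul, smul_comm]

variable [IsAlgClosed K]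

theorem eq_zero_of_semiconjBy_of_disjoint_spectrum {f g x : End K V} (h : SemiconjBy x g f)
    (hfg : Disjoint (spectrum K f) (spectrum K g)) : x = 0 := by
  nontriviality End K V
  set p := minpoly K g
  have hp : IsUnit (aeval f p) := by
    rw [← spectrum.zero_notMem_iff K, spectrum.map_polynomial_aeval_of_degree_pos f p
      (minpoly.degree_pos (Algebra.IsIntegral.isIntegral g))]
    rintro ⟨μ, hμf, hμp⟩
    exact Set.disjoint_left.mp hfg hμf
      (hasEigenvalue_iff_mem_spectrum.mp (hasEigenvalue_of_isRoot hμp))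
  have hpx : aeval f p * x = 0 := by
    rw [← (h.aeval p).eq, minpoly.aeval, mul_zero]
  exact hp.mul_right_eq_zero.mp hpx

theorem exists_ne_zero_semiconjBy_iff {f g : End K V} :
    (∃ x : End K V, x ≠ 0 ∧ SemiconjBy x g f) ↔ (spectrum K f ∩ spectrum K g).Nonempty := by
  refine ⟨fun ⟨x, hx, h⟩ => ?_, fun ⟨μ, hf, hg⟩ => exists_ne_zero_semiconjBy_of_mem_spectrum hf hg⟩
  exact Set.not_disjoint_iff_nonempty_inter.mp fun hfg =>
    hx (eq_zero_of_semiconjBy_of_disjoint_spectrum h hfg)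

end Module.End

theorem extended_spectrum_eq_of_finiteDimensional_general
    {H : Type*} [NormedAddCommGroup H] [InnerProductSpace ℂ H]
    [FiniteDimensional ℂ H] (T : H →L[ℂ] H) :
    {lam : ℂ | ∃ X : H →L[ℂ] H, X ≠ 0 ∧ T ∘L X = lam • (X ∘L T)}
      = {lam : ℂ | (spectrum ℂ T ∩ spectrum ℂ (lam • T)).Nonempty} := by
  ext lam
  let e := (Module.End.toContinuousLinearMap (𝕜 := ℂ) H).symm
  have hT : ∀ X : H →L[ℂ] H, T ∘L X = lam • (X ∘L T) ↔ SemiconjBy X (lam • T) T := by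
    intro X
    rw [SemiconjBy, mul_smul_comm, ContinuousLinearMap.mul_def, ContinuousLinearMap.mul_def,
      eq_comm]
  simp only [Set.mem_ofPred_eq, hT, ← AlgEquiv.spectrum_eq e T, ← AlgEquiv.spectrum_eq e (lam • T),
    ← Module.End.exists_ne_zero_semiconjBy_iff]
  exact (e.exists_ne_zero_semiconjBy_iff T (lam • T)).symm

/-- For an operator `T` on a finite-dimensional complex Hilbert space
(of dimension `≥ 1`), the set of extended eigenvalues of `T` equals
`{λ ∈ ℂ : σ(T) ∩ σ(λT) ≠ ∅}`. -/
theorem extended_spectrum_eq_of_finiteDimensional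
    {H : Type*} [NormedAddCommGroup H] [InnerProductSpace ℂ H]
    [FiniteDimensional ℂ H] [Nontrivial H] (T : H →L[ℂ] H) :
    {lam : ℂ | ∃ X : H →L[ℂ] H, X ≠ 0 ∧ T ∘L X = lam • (X ∘L T)}
      = {lam : ℂ | (spectrum ℂ T ∩ spectrum ℂ (lam • T)).Nonempty} :=
  extended_spectrum_eq_of_finiteDimensional_general T
end

section
/- Let T be an invertible linear operator on a finite-dimensional complex Hilbert space. Then the set of extended eigenvalues of T equals {α/β : α, β ∈ σ(T)}, the set of ratios of eigenvalues of T. -/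
/-!
Writing `TX = λXT` as `T X = X (λT)`, the theorem reduces to a Sylvester-type criterion: on a
finite-dimensional complex Hilbert space some nonzero `X` satisfies `AX = XB` iff `σ(A)` and
`σ(B)` meet. If `AX = XB` with `X ≠ 0` and `p` is the minimal polynomial of `B`, then
`p(A) X = X p(B) = 0`, so `p(A)` is not invertible and by spectral mapping `p` vanishes at some
point of `σ(A)`; the roots of `p` lie in `σ(B)`. Conversely, for `μ ∈ σ(A) ∩ σ(B)` the rank-one
operator `w ↦ ⟪v, w⟫ u`, with `Au = μu` and `B* v = μ̄ v`, intertwines `A` and `B`.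
Finally `σ(λT) = λσ(T)` and `0 ∉ σ(T)`, so `σ(T)` meets `σ(λT)` exactly when `λ = α/β`.
-/

open Polynomial

namespace spectrum

variable {𝕜 A : Type*} [Field 𝕜] [Ring A] [Algebra 𝕜 A]

theorem mem_of_isRoot_minpoly {a : A} (ha : IsIntegral 𝕜 a) {μ : 𝕜}
    (hμ : (minpoly 𝕜 a).IsRoot μ) : μ ∈ spectrum 𝕜 a := by
  obtain ⟨q, hq⟩ := dvd_iff_isRoot.mpr hμ
  have hqa : aeval a q ≠ 0 := by
    refine minpoly.aeval_ne_zero_of_dvdNotUnit_minpoly ha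
      ((monic_X_sub_C μ).of_mul_monic_left (hq ▸ minpoly.monic ha)) ⟨?_, X - C μ, ?_, ?_⟩
    · rintro rfl
      exact minpoly.ne_zero ha (by rw [hq, mul_zero])
    · exact not_isUnit_X_sub_C μ
    · rw [hq, mul_comm]
  have hfactor : (algebraMap 𝕜 A μ - a) * aeval a q = 0 := by
    have := congr(aeval a $hq)
    rw [minpoly.aeval, map_mul, map_sub, aeval_X, aeval_C] at this
    rw [← neg_sub, neg_mul, ← this, neg_zero]
  exact fun hunit ↦ hqa (hunit.mul_right_eq_zero.mp hfactor)

theorem aeval_mul_eq_mul_aeval {a b x : A} (h : a * x = x * b) (p : 𝕜[X]) :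
    aeval a p * x = x * aeval b p := by
  have hpow (n : ℕ) : a ^ n * x = x * b ^ n := ((SemiconjBy.pow_right h.symm n).eq).symm
  simp only [aeval_eq_sum_range, Finset.sum_mul, Finset.mul_sum, smul_mul_assoc,
    mul_smul_comm, hpow]

theorem inter_nonempty_of_mul_eq_mul [IsAlgClosed 𝕜] [FiniteDimensional 𝕜 A] {a b x : A}
    (hx : x ≠ 0) (h : a * x = x * b) : (spectrum 𝕜 a ∩ spectrum 𝕜 b).Nonempty := by
  have : Nontrivial A := ⟨⟨x, 0, hx⟩⟩
  have hb : IsIntegral 𝕜 b := Algebra.IsIntegral.isIntegral b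
  have hkill : aeval a (minpoly 𝕜 b) * x = 0 := by
    rw [aeval_mul_eq_mul_aeval h, minpoly.aeval, mul_zero]
  have hzero : (0 : 𝕜) ∈ spectrum 𝕜 (aeval a (minpoly 𝕜 b)) :=
    (zero_mem_iff 𝕜).mpr fun hunit ↦ hx (hunit.mul_right_eq_zero.mp hkill)
  rw [map_polynomial_aeval_of_degree_pos a _ (minpoly.degree_pos hb)] at hzero
  obtain ⟨μ, hμa, hμb⟩ := hzero
  exact ⟨μ, hμa, mem_of_isRoot_minpoly hb hμb⟩

theorem inter_smul_nonempty_iff {a : A} (ha : IsUnit a) {c : 𝕜} :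
    (spectrum 𝕜 a ∩ spectrum 𝕜 (c • a)).Nonempty ↔
      ∃ α ∈ spectrum 𝕜 a, ∃ β ∈ spectrum 𝕜 a, c = α / β := by
  have hne : ∀ μ ∈ spectrum 𝕜 a, μ ≠ 0 := fun μ hμ h0 ↦ zero_notMem 𝕜 ha (h0 ▸ hμ)
  rcases eq_or_ne c 0 with rfl | hc
  · refine iff_of_false ?_ ?_
    · rintro ⟨μ, hμa, hμ0⟩
      rw [zero_smul, mem_iff, sub_zero] at hμ0
      exact hμ0 ((isUnit_iff_ne_zero.mpr (hne μ hμa)).map (algebraMap 𝕜 A))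
    · rintro ⟨α, hα, β, hβ, h⟩
      exact (div_ne_zero (hne α hα) (hne β hβ)) h.symm
  have hmem (β : 𝕜) : c * β ∈ spectrum 𝕜 (c • a) ↔ β ∈ spectrum 𝕜 a :=
    smul_mem_smul_iff (r := Units.mk0 c hc)
  constructor
  · rintro ⟨μ, hμa, hμc⟩
    rw [← mul_div_cancel₀ μ hc, hmem] at hμc
    exact ⟨μ, hμa, μ / c, hμc, by field_simp [hne μ hμa]⟩
  · rintro ⟨α, hα, β, hβ, rfl⟩
    refine ⟨α, hα, ?_⟩
    simpa only [div_mul_cancel₀ α (hne β hβ)] using (hmem β).mpr hβ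

end spectrum

namespace ContinuousLinearMap

theorem exists_apply_eq_smul_of_mem_spectrum {𝕜 E : Type*} [NontriviallyNormedField 𝕜]
    [CompleteSpace 𝕜] [NormedAddCommGroup E] [NormedSpace 𝕜 E] [FiniteDimensional 𝕜 E]
    {T : E →L[𝕜] E} {μ : 𝕜} (hμ : μ ∈ spectrum 𝕜 T) : ∃ x ≠ 0, T x = μ • x := by
  have hT : Module.End.HasEigenvalue (T : E →ₗ[𝕜] E) μ := by
    rw [Module.End.hasEigenvalue_iff_mem_spectrum,
      ← AlgEquiv.spectrum_eq (Module.End.toContinuousLinearMap E)]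
    exact hμ
  obtain ⟨x, hx⟩ := hT.exists_hasEigenvector
  exact ⟨x, hx.2, Module.End.mem_eigenspace_iff.mp hx.1⟩

variable {𝕜 H : Type*} [RCLike 𝕜] [NormedAddCommGroup H] [InnerProductSpace 𝕜 H]
  [FiniteDimensional 𝕜 H]

theorem exists_ne_zero_comp_eq_comp_of_mem_spectrum {A B : H →L[𝕜] H} {μ : 𝕜}
    (hA : μ ∈ spectrum 𝕜 A) (hB : μ ∈ spectrum 𝕜 B) :
    ∃ X : H →L[𝕜] H, X ≠ 0 ∧ A ∘L X = X ∘L B := by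
  have : CompleteSpace H := FiniteDimensional.complete 𝕜 H
  obtain ⟨u, hu0, hAu⟩ := exists_apply_eq_smul_of_mem_spectrum hA
  have hB' : star μ ∈ spectrum 𝕜 (adjoint B) := by
    rwa [← star_eq_adjoint, spectrum.map_star, Set.mem_star, star_star]
  obtain ⟨v, hv0, hBv⟩ := exists_apply_eq_smul_of_mem_spectrum hB'
  refine ⟨(innerSL 𝕜 v).smulRight u, fun hX ↦ hu0 ?_, ?_⟩
  · have := congr($hX v)
    simpa [hv0] using this
  · ext w
    have hvBw : inner 𝕜 v (B w) = μ * inner 𝕜 v w := by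
      rw [← adjoint_inner_left, hBv, inner_smul_left, RCLike.star_def, RCLike.conj_conj]
    simp [hAu, hvBw, smul_smul, mul_comm]

theorem exists_ne_zero_comp_eq_comp_iff {E : Type*} [NormedAddCommGroup E]
    [InnerProductSpace ℂ E] [FiniteDimensional ℂ E] {A B : E →L[ℂ] E} :
    (∃ X : E →L[ℂ] E, X ≠ 0 ∧ A ∘L X = X ∘L B) ↔ (spectrum ℂ A ∩ spectrum ℂ B).Nonempty := by
  constructor
  · rintro ⟨X, hX, h⟩
    exact spectrum.inter_nonempty_of_mul_eq_mul hX h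
  · rintro ⟨μ, hA, hB⟩
    exact exists_ne_zero_comp_eq_comp_of_mem_spectrum hA hB

end ContinuousLinearMap

theorem extended_spectrum_eq_ratios_of_invertible_general
    {H : Type*} [NormedAddCommGroup H] [InnerProductSpace ℂ H]
    [FiniteDimensional ℂ H] (T : H →L[ℂ] H) (hT : IsUnit T) :
    {lam : ℂ | ∃ X : H →L[ℂ] H, X ≠ 0 ∧ T ∘L X = lam • (X ∘L T)}
      = {lam : ℂ | ∃ α ∈ spectrum ℂ T, ∃ β ∈ spectrum ℂ T, lam = α / β} := by
  ext c
  simp only [Set.mem_ofPred_eq, ← ContinuousLinearMap.comp_smul]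
  rw [ContinuousLinearMap.exists_ne_zero_comp_eq_comp_iff, spectrum.inter_smul_nonempty_iff hT]

/-- If `T` is an invertible operator on a finite-dimensional complex
Hilbert space (of dimension `≥ 1`), then the set of extended eigenvalues of `T` is
`{α/β : α, β ∈ σ(T)}`. -/
theorem extended_spectrum_eq_ratios_of_invertible
    {H : Type*} [NormedAddCommGroup H] [InnerProductSpace ℂ H]
    [FiniteDimensional ℂ H] [Nontrivial H] (T : H →L[ℂ] H) (hT : IsUnit T) :
    {lam : ℂ | ∃ X : H →L[ℂ] H, X ≠ 0 ∧ T ∘L X = lam • (X ∘L T)}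
      = {lam : ℂ | ∃ α ∈ spectrum ℂ T, ∃ β ∈ spectrum ℂ T, lam = α / β} :=
  extended_spectrum_eq_ratios_of_invertible_general T hT
end

section
/- Let T be an operator on a finite-dimensional complex Hilbert space. Then the set of extended eigenvalues of T equals {1} if and only if σ(T) = {α} for some nonzero α ∈ ℂ. -/
/-!
If `μ, ν ∈ σ(T)`, a right eigenvector `u` of `T` for `μ` and a left eigenvector `φ` for `ν` give
the rank-one operator `X = φ(·) u` with `TX = μX` and `XT = νX`, so every `r` with `rν = μ` is an
extended eigenvalue. Hence if the extended eigenvalues are `{1}`, then `0 ∉ σ(T)` (else `0` would be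
one) and `μ / ν = 1` for all `μ, ν ∈ σ(T)`.
Conversely, if `σ(T) = {α}` with `α ≠ 0`, then `α - T` is nilpotent, and `TX = rXT` means
`X (α - rT) = (α - T) X`, hence `X (α - rT)ⁿ = 0`; for `r ≠ 1` we have `α ∉ σ(rT) = {rα}`, so
`α - rT` is invertible and `X = 0`.
-/

def extendedEigenvalues (R : Type*) {A : Type*} [CommSemiring R] [Semiring A] [Algebra R A]
    (a : A) : Set R :=
  {r | ∃ x : A, x ≠ 0 ∧ a * x = r • (x * a)}

section Algebra

variable {R A B : Type*} [CommSemiring R] [Semiring A] [Semiring B] [Algebra R A] [Algebra R B]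

theorem extendedEigenvalues_map (e : A ≃ₐ[R] B) (a : A) :
    extendedEigenvalues R (e a) = extendedEigenvalues R a := by
  ext r
  constructor
  · rintro ⟨y, hy, h⟩
    refine ⟨e.symm y, by simpa using hy, e.injective ?_⟩
    simpa only [map_mul, map_smul, AlgEquiv.apply_symm_apply] using h
  · rintro ⟨x, hx, h⟩
    exact ⟨e x, (map_ne_zero_iff e e.injective).2 hx, by rw [← map_mul, h, map_smul, map_mul]⟩

theorem one_mem_extendedEigenvalues [Nontrivial A] (a : A) : 1 ∈ extendedEigenvalues R a :=
  ⟨1, one_ne_zero, by rw [one_smul, mul_one, one_mul]⟩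

theorem mem_extendedEigenvalues_of_mul_eq_smul {a x : A} {r μ ν : R} (hx : x ≠ 0)
    (hax : a * x = μ • x) (hxa : x * a = ν • x) (hr : r * ν = μ) :
    r ∈ extendedEigenvalues R a :=
  ⟨x, hx, by rw [hax, hxa, smul_smul, hr]⟩

end Algebra

theorem SemiconjBy.eq_zero_of_isUnit_of_isNilpotent {M : Type*} [MonoidWithZero M] {x b c : M}
    (h : SemiconjBy x b c) (hb : IsUnit b) (hc : IsNilpotent c) : x = 0 := by
  obtain ⟨n, hn⟩ := hc
  refine (hb.pow n).mul_left_eq_zero.mp ?_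
  rw [(h.pow_right n).eq, hn, zero_mul]

theorem extendedEigenvalues_eq_singleton_one {K A : Type*} [Field K] [Ring A] [Algebra K A]
    {a : A} {α : K} (hα : α ≠ 0) (hσ : spectrum K a = {α})
    (hnil : IsNilpotent (algebraMap K A α - a)) : extendedEigenvalues K a = {1} := by
  have : Nontrivial A :=
    not_subsingleton_iff_nontrivial.mp fun _ => by simp [spectrum.of_subsingleton] at hσ
  refine Set.eq_singleton_iff_unique_mem.2 ⟨one_mem_extendedEigenvalues a, ?_⟩
  rintro r ⟨x, hx, h⟩
  by_contra hr
  have hunit : IsUnit (algebraMap K A α - r • a) := by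
    refine spectrum.notMem_iff.mp fun hmem => hr ?_
    rw [spectrum.smul_eq_smul r a (hσ ▸ Set.singleton_nonempty α), hσ, Set.smul_set_singleton,
      Set.mem_singleton_iff, smul_eq_mul] at hmem
    exact (mul_eq_right₀ hα).mp hmem.symm
  refine hx (SemiconjBy.eq_zero_of_isUnit_of_isNilpotent ?_ hunit hnil)
  rw [SemiconjBy, mul_sub, sub_mul, mul_smul_comm, ← h, Algebra.commutes]

namespace Module.End

variable {K V : Type*} [Field K] [AddCommGroup V] [Module K V] [FiniteDimensional K V]

open Polynomial in
theorem isNilpotent_algebraMap_sub_of_spectrum_eq_singleton [IsAlgClosed K] {f : End K V} {α : K}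
    (h : spectrum K f = {α}) : IsNilpotent (algebraMap K (End K V) α - f) := by
  have hroots : f.charpoly.roots = Multiset.replicate f.charpoly.roots.card α :=
    Multiset.eq_replicate.2 ⟨rfl, fun μ hμ => by
      rw [← Set.mem_singleton_iff, ← h, mem_spectrum_iff_isRoot_charpoly]
      exact isRoot_of_mem_roots hμ⟩
  have hcharpoly : f.charpoly = (X - C α) ^ f.charpoly.roots.card := by
    conv_lhs => rw [(IsAlgClosed.splits f.charpoly).eq_prod_roots_of_monic f.charpoly_monic,
      hroots]
    rw [Multiset.map_replicate, Multiset.prod_replicate]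
  refine ⟨f.charpoly.roots.card, ?_⟩
  have := f.aeval_self_charpoly
  rw [hcharpoly, map_pow, map_sub, aeval_X, aeval_C] at this
  rw [← neg_sub, neg_pow, this, mul_zero]

theorem exists_mul_eq_smul_and_mul_eq_smul {f : End K V} {μ ν : K}
    (hμ : μ ∈ spectrum K f) (hν : ν ∈ spectrum K f) :
    ∃ x : End K V, x ≠ 0 ∧ f * x = μ • x ∧ x * f = ν • x := by
  obtain ⟨u, hu⟩ := (hasEigenvalue_iff_mem_spectrum.mpr hμ).exists_hasEigenvector
  have hrange : LinearMap.range (algebraMap K (End K V) ν - f) < ⊤ := by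
    rw [lt_top_iff_ne_top, Ne, ← LinearMap.isUnit_iff_range_eq_top]
    exact hν
  obtain ⟨φ, hφ, hφrange⟩ := Submodule.exists_dual_map_eq_bot_of_lt_top hrange inferInstance
  have hφf (v : V) : φ (f v) = ν * φ v := by
    have := Submodule.mem_map_of_mem (f := φ)
      (LinearMap.mem_range_self (algebraMap K (End K V) ν - f) v)
    rw [hφrange, Submodule.mem_bot, LinearMap.sub_apply, Module.algebraMap_end_apply, map_sub,
      map_smul, sub_eq_zero] at this
    exact this.symm
  obtain ⟨w, hw⟩ : ∃ w, φ w ≠ 0 := by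
    by_contra! h
    exact hφ (LinearMap.ext h)
  refine ⟨φ.smulRight u, fun h => smul_ne_zero hw hu.2 ?_, ?_, ?_⟩
  · simpa using LinearMap.congr_fun h w
  · ext v
    simp [hu.apply_eq_smul, smul_comm μ]
  · ext v
    simp [hφf, mul_smul]

theorem extendedEigenvalues_eq_singleton_one_iff [IsAlgClosed K] (f : End K V) :
    extendedEigenvalues K f = {1} ↔ ∃ α : K, α ≠ 0 ∧ spectrum K f = {α} := by
  constructor
  · intro hE
    obtain ⟨x, hx, -⟩ : 1 ∈ extendedEigenvalues K f := hE ▸ rfl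
    have : Nontrivial (End K V) := nontrivial_of_ne x 0 hx
    obtain ⟨α, hα⟩ := spectrum.nonempty_of_isAlgClosed_of_finiteDimensional K f
    have hα0 : α ≠ 0 := by
      rintro rfl
      obtain ⟨x, hx, hfx, hxf⟩ := exists_mul_eq_smul_and_mul_eq_smul hα hα
      have := mem_extendedEigenvalues_of_mul_eq_smul (r := 0) hx hfx hxf (zero_mul 0)
      rw [hE] at this
      exact zero_ne_one this
    refine ⟨α, hα0, Set.eq_singleton_iff_unique_mem.2 ⟨hα, fun μ hμ => ?_⟩⟩
    obtain ⟨x, hx, hfx, hxf⟩ := exists_mul_eq_smul_and_mul_eq_smul hμ hα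
    have := mem_extendedEigenvalues_of_mul_eq_smul hx hfx hxf (div_mul_cancel₀ μ hα0)
    rwa [hE, Set.mem_singleton_iff, div_eq_one_iff_eq hα0] at this
  · rintro ⟨α, hα, hσ⟩
    exact extendedEigenvalues_eq_singleton_one hα hσ
      (isNilpotent_algebraMap_sub_of_spectrum_eq_singleton hσ)

end Module.End

theorem extended_spectrum_eq_singleton_one_iff_general
    {H : Type*} [NormedAddCommGroup H] [InnerProductSpace ℂ H]
    [FiniteDimensional ℂ H] (T : H →L[ℂ] H) :
    {lam : ℂ | ∃ X : H →L[ℂ] H, X ≠ 0 ∧ T ∘L X = lam • (X ∘L T)} = {1}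
      ↔ ∃ α : ℂ, α ≠ 0 ∧ spectrum ℂ T = {α} := by
  have hT : Module.End.toContinuousLinearMap H (T : Module.End ℂ H) = T := rfl
  change extendedEigenvalues ℂ T = {1} ↔ _
  rw [← hT, extendedEigenvalues_map, AlgEquiv.spectrum_eq]
  exact Module.End.extendedEigenvalues_eq_singleton_one_iff _

/-- For an operator `T` on a finite-dimensional complex Hilbert space
(of dimension `≥ 1`), the set of extended eigenvalues of `T` is `{1}` if and only if
`σ(T) = {α}` for some nonzero `α`. -/
theorem extended_spectrum_eq_singleton_one_iff
    {H : Type*} [NormedAddCommGroup H] [InnerProductSpace ℂ H]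
    [FiniteDimensional ℂ H] [Nontrivial H] (T : H →L[ℂ] H) :
    {lam : ℂ | ∃ X : H →L[ℂ] H, X ≠ 0 ∧ T ∘L X = lam • (X ∘L T)} = {1}
      ↔ ∃ α : ℂ, α ≠ 0 ∧ spectrum ℂ T = {α} :=
  extended_spectrum_eq_singleton_one_iff_general T
end

section
/- Let T be an operator on a finite-dimensional complex Hilbert space. Then the set of extended eigenvalues of T is all of ℂ if and only if 0 ∈ σ(T). -/
/-!
If `T` is invertible, `T X = 0` forces `X = 0`, so `0` is not an extended eigenvalue. If `T` is
not invertible, then in finite dimension it is neither injective nor surjective; a rank-one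
operator `X = f(·) v` with `T v = 0` and `f` vanishing on the range of `T` satisfies
`T X = 0 = X T`, hence `T X = λ X T` for every `λ`.
-/

theorem Module.End.exists_ne_zero_mul_eq_zero_and_mul_eq_zero {K V : Type*} [Field K]
    [AddCommGroup V] [Module K V] [FiniteDimensional K V] {T : Module.End K V}
    (hT : ¬IsUnit T) : ∃ X : Module.End K V, X ≠ 0 ∧ T * X = 0 ∧ X * T = 0 := by
  have hinj : ¬Function.Injective T := fun h =>
    hT ((Module.End.isUnit_iff T).mpr ⟨h, LinearMap.injective_iff_surjective.mp h⟩)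
  obtain ⟨v, hv, hv0⟩ :=
    Submodule.exists_mem_ne_zero_of_ne_bot (mt LinearMap.ker_eq_bot.mp hinj)
  have hrange : LinearMap.range T < ⊤ := lt_top_iff_ne_top.mpr
    (mt LinearMap.range_eq_top.mp (mt LinearMap.injective_iff_surjective.mpr hinj))
  obtain ⟨f, hf0, hf⟩ := (LinearMap.range T).exists_le_ker_of_lt_top hrange
  obtain ⟨x, hx⟩ := DFunLike.ne_iff.mp hf0
  refine ⟨f.smulRight v, fun h => ?_, ?_, ?_⟩
  · exact hx (by simpa [hv0] using LinearMap.congr_fun h x)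
  · ext y
    simp [LinearMap.mem_ker.mp hv]
  · ext y
    simp [LinearMap.mem_ker.mp (hf (LinearMap.mem_range_self T y))]

theorem ContinuousLinearMap.exists_ne_zero_mul_eq_zero_and_mul_eq_zero {𝕜 E : Type*}
    [NontriviallyNormedField 𝕜] [CompleteSpace 𝕜] [NormedAddCommGroup E] [NormedSpace 𝕜 E]
    [FiniteDimensional 𝕜 E] {T : E →L[𝕜] E} (hT : ¬IsUnit T) :
    ∃ X : E →L[𝕜] E, X ≠ 0 ∧ T * X = 0 ∧ X * T = 0 := by
  let e := Module.End.toContinuousLinearMap (𝕜 := 𝕜) E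
  obtain ⟨X, hX0, hTX, hXT⟩ :=
    Module.End.exists_ne_zero_mul_eq_zero_and_mul_eq_zero (T := e.symm T)
      (by rwa [isUnit_map_iff])
  refine ⟨e X, (map_ne_zero_iff e e.injective).mpr hX0, ?_, ?_⟩
  · rw [← e.apply_symm_apply T, ← map_mul, hTX, map_zero]
  · rw [← e.apply_symm_apply T, ← map_mul, hXT, map_zero]

theorem extended_spectrum_eq_univ_iff_general
    {H : Type*} [NormedAddCommGroup H] [InnerProductSpace ℂ H]
    [FiniteDimensional ℂ H] (T : H →L[ℂ] H) :
    {lam : ℂ | ∃ X : H →L[ℂ] H, X ≠ 0 ∧ T ∘L X = lam • (X ∘L T)} = Set.univ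
      ↔ (0 : ℂ) ∈ spectrum ℂ T := by
  rw [spectrum.zero_mem_iff]
  constructor
  · intro h hT
    obtain ⟨X, hX0, hTX⟩ :
        (0 : ℂ) ∈ {lam : ℂ | ∃ X : H →L[ℂ] H, X ≠ 0 ∧ T ∘L X = lam • (X ∘L T)} :=
      h ▸ Set.mem_univ 0
    rw [zero_smul] at hTX
    exact hX0 (hT.mul_right_eq_zero.mp hTX)
  · intro hT
    obtain ⟨X, hX0, hTX, hXT⟩ := ContinuousLinearMap.exists_ne_zero_mul_eq_zero_and_mul_eq_zero hT
    refine Set.eq_univ_of_forall fun lam => ⟨X, hX0, ?_⟩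
    rw [← ContinuousLinearMap.mul_def, hTX, ← ContinuousLinearMap.mul_def, hXT, smul_zero]

/-- For an operator `T` on a finite-dimensional complex Hilbert space
(of dimension `≥ 1`), the set of extended eigenvalues of `T` is all of `ℂ` if and only if
`0 ∈ σ(T)`. -/
theorem extended_spectrum_eq_univ_iff
    {H : Type*} [NormedAddCommGroup H] [InnerProductSpace ℂ H]
    [FiniteDimensional ℂ H] [Nontrivial H] (T : H →L[ℂ] H) :
    {lam : ℂ | ∃ X : H →L[ℂ] H, X ≠ 0 ∧ T ∘L X = lam • (X ∘L T)} = Set.univ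
      ↔ (0 : ℂ) ∈ spectrum ℂ T :=
  extended_spectrum_eq_univ_iff_general T
end
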